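/- Let N = (S, A, T) be a P/T net and m1, m2 markings. If m1 ∼id m2 (i-d-place bisimilar), then m1 ∼s m2 (step bisimilar). -/
import Mathlib


namespace PlaceBisimPaper

/-- A transition of a P/T net: (pre-set, label, post-set). -/
abbrev Tr (S A : Type*) := Multiset S × A × Multiset S

/-- A finite P/T net over places `S` and labels `A`: a finite set of transitions,
each with a nonempty pre-set. -/
structure PTNet (S A : Type*) where
  T : Finset (Tr S A)
  pre_nonempty : ∀ t ∈ T, t.1 ≠ 0

variable {S A : Type*}

/-- The additive closure `R⊕` of a place relation `R ⊆ S × S`. -/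
inductive AddClosure (R : S → S → Prop) : Multiset S → Multiset S → Prop
  | nil : AddClosure R 0 0
  | cons {s1 s2 : S} {m1 m2 : Multiset S} :
      R s1 s2 → AddClosure R m1 m2 → AddClosure R (s1 ::ₘ m1) (s2 ::ₘ m2)

variable [DecidableEq S]

/-- `Fires N m t m'`: transition `t` of `N` is enabled at marking `m` and its firing
produces `m'`. -/
def Fires (N : PTNet S A) (m : Multiset S) (t : Tr S A) (m' : Multiset S) : Prop :=
  t ∈ N.T ∧ t.1 ≤ m ∧ m' = m - t.1 + t.2.2

/-- A place bisimulation on the net `N`. -/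
def IsPlaceBisim (N : PTNet S A) (R : S → S → Prop) : Prop :=
  ∀ m1 m2, AddClosure R m1 m2 →
    (∀ t1 m1', Fires N m1 t1 m1' →
      ∃ t2 m2', Fires N m2 t2 m2' ∧ AddClosure R t1.1 t2.1 ∧ t1.2.1 = t2.2.1 ∧
        AddClosure R t1.2.2 t2.2.2 ∧ AddClosure R m1' m2') ∧
    (∀ t2 m2', Fires N m2 t2 m2' →
      ∃ t1 m1', Fires N m1 t1 m1' ∧ AddClosure R t1.1 t2.1 ∧ t1.2.1 = t2.2.1 ∧
        AddClosure R t1.2.2 t2.2.2 ∧ AddClosure R m1' m2')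

/-- Place bisimilarity `m1 ∼p m2`. -/
def PlaceBisimilar (N : PTNet S A) (m1 m2 : Multiset S) : Prop :=
  ∃ R, IsPlaceBisim N R ∧ AddClosure R m1 m2

/-- An interleaving bisimulation on the markings of `N`. -/
def IsInterleavingBisim (N : PTNet S A) (B : Multiset S → Multiset S → Prop) : Prop :=
  ∀ m1 m2, B m1 m2 →
    (∀ t1 m1', Fires N m1 t1 m1' →
      ∃ t2 m2', Fires N m2 t2 m2' ∧ t1.2.1 = t2.2.1 ∧ B m1' m2') ∧
    (∀ t2 m2', Fires N m2 t2 m2' →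
      ∃ t1 m1', Fires N m1 t1 m1' ∧ t1.2.1 = t2.2.1 ∧ B m1' m2')

/-- Interleaving bisimilarity `m1 ∼int m2`. -/
def InterleavingBisimilar (N : PTNet S A) (m1 m2 : Multiset S) : Prop :=
  ∃ B, IsInterleavingBisim N B ∧ B m1 m2

/- ## Causal nets, processes, causal-net and fully-concurrent bisimulations.
Conditions and events are drawn from the countable universe `ℕ`
(`Sum.inl` = conditions, `Sum.inr` = events in the flow relation). -/

/-- The flow relation of a (candidate) causal net. -/
def flowRel (E : Finset ℕ) (epre epost : ℕ → Finset ℕ) : (ℕ ⊕ ℕ) → (ℕ ⊕ ℕ) → Prop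
  | Sum.inl b, Sum.inr e => e ∈ E ∧ b ∈ epre e
  | Sum.inr e, Sum.inl b => e ∈ E ∧ b ∈ epost e
  | _, _ => False

/-- A causal net: finite sets of conditions `B` and events `E` (with per-event
pre-sets, post-sets, and labels), acyclic, with unbranched conditions; all arcs
have weight 1 since pre- and post-sets of events are plain finite sets. -/
structure CausalNet (A : Type*) where
  B : Finset ℕ
  E : Finset ℕ
  epre : ℕ → Finset ℕ
  epost : ℕ → Finset ℕ
  lab : ℕ → A
  pre_sub : ∀ e ∈ E, epre e ⊆ B
  post_sub : ∀ e ∈ E, epost e ⊆ B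
  unbranched_pre : ∀ b ∈ B, ∀ e1 ∈ E, ∀ e2 ∈ E, b ∈ epost e1 → b ∈ epost e2 → e1 = e2
  unbranched_post : ∀ b ∈ B, ∀ e1 ∈ E, ∀ e2 ∈ E, b ∈ epre e1 → b ∈ epre e2 → e1 = e2
  acyclic : ∀ x : ℕ ⊕ ℕ, ¬ Relation.TransGen (flowRel E epre epost) x x

/-- `Min(C)`: the conditions with empty pre-set (exactly the initially marked ones). -/
noncomputable def CausalNet.Min (C : CausalNet A) : Finset ℕ :=
  open Classical in C.B.filter fun b => ∀ e ∈ C.E, b ∉ C.epost e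

/-- `Max(C)`: the conditions with empty post-set. -/
noncomputable def CausalNet.Max (C : CausalNet A) : Finset ℕ :=
  open Classical in C.B.filter fun b => ∀ e ∈ C.E, b ∉ C.epre e

/-- A folding candidate: a type-preserving map sending conditions to places and
events to transitions. -/
structure Folding (S A : Type*) where
  fB : ℕ → S
  fE : ℕ → Tr S A

/-- `ρ` is a folding from the causal net `C` into the net `N`, i.e. `(C, ρ)` is a
process of `N(ρ(Min(C)))`. -/
def IsFolding (N : PTNet S A) (C : CausalNet A) (ρ : Folding S A) : Prop :=
  (∀ e ∈ C.E, ρ.fE e ∈ N.T) ∧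
  (∀ e ∈ C.E, C.lab e = (ρ.fE e).2.1) ∧
  (∀ e ∈ C.E, (C.epre e).val.map ρ.fB = (ρ.fE e).1) ∧
  (∀ e ∈ C.E, (C.epost e).val.map ρ.fB = (ρ.fE e).2.2)

/-- The initial marking `ρ(Min(C))` of the process `(C, ρ)`. -/
noncomputable def initMarking (C : CausalNet A) (ρ : Folding S A) : Multiset S :=
  C.Min.val.map ρ.fB

/-- The marking `ρ(Max(C))` of the process `(C, ρ)`. -/
noncomputable def maxMarking (C : CausalNet A) (ρ : Folding S A) : Multiset S :=
  C.Max.val.map ρ.fB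

/-- `C1 [e⟩ C2`: the causal net `C1` moves in one step to `C2` through the fresh
event `e`: `pre(e) ⊆ Max(C1)`, `E2 = E1 ∪ {e}`, `B2 = B1 ∪ post(e)`. -/
def CNMove (C1 : CausalNet A) (e : ℕ) (C2 : CausalNet A) : Prop :=
  e ∉ C1.E ∧
  C2.epre e ⊆ C1.Max ∧
  C2.E = insert e C1.E ∧
  C2.B = C1.B ∪ C2.epost e ∧
  (∀ e' ∈ C1.E, C2.epre e' = C1.epre e' ∧ C2.epost e' = C1.epost e' ∧ C2.lab e' = C1.lab e')

/-- `(C1, ρ1) ⟶e (C2, ρ2)`: one-step move of processes of `N`, with `ρ1 ⊆ ρ2`. -/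
def ProcMove (N : PTNet S A) (C1 : CausalNet A) (ρ1 : Folding S A) (e : ℕ)
    (C2 : CausalNet A) (ρ2 : Folding S A) : Prop :=
  IsFolding N C1 ρ1 ∧ IsFolding N C2 ρ2 ∧ CNMove C1 e C2 ∧
  (∀ b ∈ C1.B, ρ2.fB b = ρ1.fB b) ∧ (∀ e' ∈ C1.E, ρ2.fE e' = ρ1.fE e')

/-- A causal-net bisimulation on `N`: a relation of triples `(ρ1, C, ρ2)`. -/
def IsCNBisim (N : PTNet S A)
    (R : Folding S A → CausalNet A → Folding S A → Prop) : Prop :=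
  ∀ ρ1 C ρ2, R ρ1 C ρ2 →
    IsFolding N C ρ1 ∧ IsFolding N C ρ2 ∧
    (∀ e C' ρ1', ProcMove N C ρ1 e C' ρ1' →
      ∃ ρ2', ProcMove N C ρ2 e C' ρ2' ∧ R ρ1' C' ρ2') ∧
    (∀ e C' ρ2', ProcMove N C ρ2 e C' ρ2' →
      ∃ ρ1', ProcMove N C ρ1 e C' ρ1' ∧ R ρ1' C' ρ2')

/-- Causal-net bisimilarity `m1 ∼cn m2`. -/
def CNBisimilar (N : PTNet S A) (m1 m2 : Multiset S) : Prop :=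
  ∃ R, IsCNBisim N R ∧
    ∃ (C0 : CausalNet A) (ρ1 ρ2 : Folding S A), C0.E = ∅ ∧ R ρ1 C0 ρ2 ∧
      initMarking C0 ρ1 = m1 ∧ maxMarking C0 ρ1 = m1 ∧
      initMarking C0 ρ2 = m2 ∧ maxMarking C0 ρ2 = m2

/-- The causal partial order on the events of `C`: `e1 ⪯ e2` iff there is a path
in `C` from `e1` to `e2`. -/
def CausalNet.ele (C : CausalNet A) (e1 e2 : ℕ) : Prop :=
  Relation.ReflTransGen (flowRel C.E C.epre C.epost) (Sum.inr e1) (Sum.inr e2)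

/-- `g` is an event isomorphism between the causal nets `C1` and `C2`: a
label-preserving, order-preserving bijection between their events. -/
def IsEventIso (C1 C2 : CausalNet A) (g : ℕ → ℕ) : Prop :=
  (∀ e ∈ C1.E, g e ∈ C2.E) ∧
  (∀ e ∈ C1.E, ∀ e' ∈ C1.E, g e = g e' → e = e') ∧
  (∀ e2 ∈ C2.E, ∃ e1 ∈ C1.E, g e1 = e2) ∧
  (∀ e ∈ C1.E, C1.lab e = C2.lab (g e)) ∧
  (∀ e ∈ C1.E, ∀ e' ∈ C1.E, (C1.ele e e' ↔ C2.ele (g e) (g e')))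

/-- A fully-concurrent bisimulation on `N`: a relation of triples `(π1, g, π2)`. -/
def IsFCBisim (N : PTNet S A)
    (R : CausalNet A → Folding S A → (ℕ → ℕ) → CausalNet A → Folding S A → Prop) : Prop :=
  ∀ C1 ρ1 g C2 ρ2, R C1 ρ1 g C2 ρ2 →
    IsFolding N C1 ρ1 ∧ IsFolding N C2 ρ2 ∧ IsEventIso C1 C2 g ∧
    (∀ e1 C1' ρ1', ProcMove N C1 ρ1 e1 C1' ρ1' →
      ∃ e2 C2' ρ2' g', ProcMove N C2 ρ2 e2 C2' ρ2' ∧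
        (ρ1'.fE e1).2.1 = (ρ2'.fE e2).2.1 ∧
        (∀ e ∈ C1.E, g' e = g e) ∧ g' e1 = e2 ∧
        R C1' ρ1' g' C2' ρ2') ∧
    (∀ e2 C2' ρ2', ProcMove N C2 ρ2 e2 C2' ρ2' →
      ∃ e1 C1' ρ1' g', ProcMove N C1 ρ1 e1 C1' ρ1' ∧
        (ρ1'.fE e1).2.1 = (ρ2'.fE e2).2.1 ∧
        (∀ e ∈ C1.E, g' e = g e) ∧ g' e1 = e2 ∧
        R C1' ρ1' g' C2' ρ2')

/-- Fully-concurrent bisimilarity `m1 ∼fc m2`. -/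
def FCBisimilar (N : PTNet S A) (m1 m2 : Multiset S) : Prop :=
  ∃ R, IsFCBisim N R ∧
    ∃ (C1 : CausalNet A) (ρ1 : Folding S A) (g : ℕ → ℕ)
      (C2 : CausalNet A) (ρ2 : Folding S A),
      C1.E = ∅ ∧ C2.E = ∅ ∧ R C1 ρ1 g C2 ρ2 ∧
      initMarking C1 ρ1 = m1 ∧ maxMarking C1 ρ1 = m1 ∧
      initMarking C2 ρ2 = m2 ∧ maxMarking C2 ρ2 = m2

/- ## D-place relations: the empty marking `θ` as an extra dummy place.
An element of `Option S` is either a place (`some s`) or the dummy `θ` (`none`). -/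

/-- The marking denoted by an element of `S ∪ {θ}`. -/
def optM : Option S → Multiset S
  | none => 0
  | some s => {s}

/-- The d-additive closure `R⊙` of a d-place relation
`R ⊆ (S ∪ {θ}) × (S ∪ {θ})`. -/
inductive DAddClosure (R : Option S → Option S → Prop) : Multiset S → Multiset S → Prop
  | nil : DAddClosure R 0 0
  | cons {r1 r2 : Option S} {m1 m2 : Multiset S} :
      R r1 r2 → DAddClosure R m1 m2 → DAddClosure R (optM r1 + m1) (optM r2 + m2)

/-- A d-place bisimulation on `N`. -/
def IsDPlaceBisim (N : PTNet S A) (R : Option S → Option S → Prop) : Prop :=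
  ∀ m1 m2, DAddClosure R m1 m2 →
    (∀ t1 m1', Fires N m1 t1 m1' →
      ∃ t2 m2', Fires N m2 t2 m2' ∧ DAddClosure R t1.1 t2.1 ∧ t1.2.1 = t2.2.1 ∧
        DAddClosure R t1.2.2 t2.2.2 ∧ DAddClosure R m1' m2') ∧
    (∀ t2 m2', Fires N m2 t2 m2' →
      ∃ t1 m1', Fires N m1 t1 m1' ∧ DAddClosure R t1.1 t2.1 ∧ t1.2.1 = t2.2.1 ∧
        DAddClosure R t1.2.2 t2.2.2 ∧ DAddClosure R m1' m2')

/-- D-place bisimilarity `m1 ∼d m2`. -/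
def DPlaceBisimilar (N : PTNet S A) (m1 m2 : Multiset S) : Prop :=
  ∃ R, IsDPlaceBisim N R ∧ DAddClosure R m1 m2

/-- An i-d-place bisimulation on `N`: a d-place relation whose d-additive closure
is an interleaving bisimulation. -/
def IsIDPlaceBisim (N : PTNet S A) (R : Option S → Option S → Prop) : Prop :=
  ∀ m1 m2, DAddClosure R m1 m2 →
    (∀ t1 m1', Fires N m1 t1 m1' →
      ∃ t2 m2', Fires N m2 t2 m2' ∧ t1.2.1 = t2.2.1 ∧ DAddClosure R m1' m2') ∧
    (∀ t2 m2', Fires N m2 t2 m2' →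
      ∃ t1 m1', Fires N m1 t1 m1' ∧ t1.2.1 = t2.2.1 ∧ DAddClosure R m1' m2')

/-- I-d-place bisimilarity `m1 ∼id m2`. -/
def IDPlaceBisimilar (N : PTNet S A) (m1 m2 : Multiset S) : Prop :=
  ∃ R, IsIDPlaceBisim N R ∧ DAddClosure R m1 m2

/- ## Steps and step bisimulation. -/

/-- `StepFires N m G m'`: the step `G` (a nonempty finite multiset of transitions
of `N`) is enabled at `m` and its execution produces `m'`. -/
def StepFires (N : PTNet S A) (m : Multiset S) (G : Multiset (Tr S A))
    (m' : Multiset S) : Prop :=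
  G ≠ 0 ∧ (∀ t ∈ G, t ∈ N.T) ∧ (G.map Prod.fst).sum ≤ m ∧
    m' = m - (G.map Prod.fst).sum + (G.map fun t => t.2.2).sum

/-- The label of a step: the multiset of the labels of its transitions. -/
def stepLabel (G : Multiset (Tr S A)) : Multiset A := G.map fun t => t.2.1

/-- A step bisimulation on the markings of `N`. -/
def IsStepBisim (N : PTNet S A) (B : Multiset S → Multiset S → Prop) : Prop :=
  ∀ m1 m2, B m1 m2 →
    (∀ G1 m1', StepFires N m1 G1 m1' →
      ∃ G2 m2', StepFires N m2 G2 m2' ∧ stepLabel G1 = stepLabel G2 ∧ B m1' m2') ∧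
    (∀ G2 m2', StepFires N m2 G2 m2' →
      ∃ G1 m1', StepFires N m1 G1 m1' ∧ stepLabel G1 = stepLabel G2 ∧ B m1' m2')

/-- Step bisimilarity `m1 ∼s m2`. -/
def StepBisimilar (N : PTNet S A) (m1 m2 : Multiset S) : Prop :=
  ∃ B, IsStepBisim N B ∧ B m1 m2


section Aux

variable {R : Option S → Option S → Prop}

lemma DAddClosure.add' {a b c d : Multiset S}
    (h1 : DAddClosure R a c) (h2 : DAddClosure R b d) :
    DAddClosure R (a + b) (c + d) := by
  induction h1 with
  | nil => simpa using h2
  | cons hr _ ih => rw [add_assoc, add_assoc]; exact .cons hr ih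

lemma DAddClosure.flip' {a b : Multiset S} (h : DAddClosure R a b) :
    DAddClosure (fun x y => R y x) b a := by
  induction h with
  | nil => exact .nil
  | cons hr _ ih => exact .cons hr ih

lemma DAddClosure.decompose {m b : Multiset S}
    (h : DAddClosure R m b) : ∀ a1 a2, m = a1 + a2 →
    ∃ b1 b2, b = b1 + b2 ∧ DAddClosure R a1 b1 ∧ DAddClosure R a2 b2 := by
  induction h with
  | nil =>
    intro a1 a2 heq
    have h1 : a1 = 0 := Multiset.le_zero.mp (by rw [heq]; exact Multiset.le_add_right a1 a2)
    have h2 : a2 = 0 := Multiset.le_zero.mp (by rw [heq]; exact Multiset.le_add_left a2 a1)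
    exact ⟨0, 0, by simp, by rw [h1]; exact .nil, by rw [h2]; exact .nil⟩
  | @cons r1 r2 n1 n2 hr hm ih =>
    intro a1 a2 heq
    cases r1 with
    | none =>
      simp only [optM, zero_add] at heq
      obtain ⟨b1, b2, rfl, hb1, hb2⟩ := ih a1 a2 heq
      refine ⟨optM r2 + b1, b2, by abel, ?_, hb2⟩
      have := DAddClosure.cons hr hb1
      simpa [optM] using this
    | some s =>
      have heq' : s ::ₘ n1 = a1 + a2 := by
        simpa [optM, Multiset.singleton_add] using heq
      have hs : s ∈ a1 + a2 := by rw [← heq']; exact Multiset.mem_cons_self s n1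
      rcases Multiset.mem_add.mp hs with hs1 | hs2
      · obtain ⟨a1', rfl⟩ := Multiset.exists_cons_of_mem hs1
        have hn1 : n1 = a1' + a2 := by
          have : s ::ₘ n1 = s ::ₘ (a1' + a2) := by
            rw [heq']; rw [Multiset.cons_add]
          exact (Multiset.cons_inj_right s).mp this
        obtain ⟨b1, b2, rfl, hb1, hb2⟩ := ih a1' a2 hn1
        refine ⟨optM r2 + b1, b2, by abel, ?_, hb2⟩
        have := DAddClosure.cons (r1 := some s) hr hb1
        simpa [optM, Multiset.singleton_add] using this
      · obtain ⟨a2', rfl⟩ := Multiset.exists_cons_of_mem hs2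
        have hn1 : n1 = a1 + a2' := by
          have h2 : s ::ₘ n1 = s ::ₘ (a1 + a2') := by
            rw [heq', Multiset.add_cons]
          exact (Multiset.cons_inj_right s).mp h2
        obtain ⟨b1, b2, rfl, hb1, hb2⟩ := ih a1 a2' hn1
        refine ⟨b1, optM r2 + b2, by abel, hb1, ?_⟩
        · have := DAddClosure.cons (r1 := some s) hr hb2
          simpa [optM, Multiset.singleton_add] using this

lemma sub_helper {p1 p2 c1 c2 : Multiset S} (h1 : p1 ≤ c1) (h2 : p2 ≤ c2) :
    (c1 + c2) - (p1 + p2) = (c1 - p1) + (c2 - p2) := by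
  obtain ⟨d1, rfl⟩ := Multiset.le_iff_exists_add.mp h1
  obtain ⟨d2, rfl⟩ := Multiset.le_iff_exists_add.mp h2
  rw [add_add_add_comm, add_tsub_cancel_left, add_tsub_cancel_left, add_tsub_cancel_left]

lemma match_step {N : PTNet S A} (hR : IsIDPlaceBisim N R) :
    ∀ (G1 : Multiset (Tr S A)) (c : Multiset S),
      (∀ t ∈ G1, t ∈ N.T) → DAddClosure R (G1.map Prod.fst).sum c →
      ∃ G2 : Multiset (Tr S A), (∀ t ∈ G2, t ∈ N.T) ∧ stepLabel G1 = stepLabel G2 ∧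
        (G2.map Prod.fst).sum ≤ c ∧
        DAddClosure R (G1.map (fun t => t.2.2)).sum
          (c - (G2.map Prod.fst).sum + (G2.map (fun t => t.2.2)).sum) := by
  intro G1
  induction G1 using Multiset.induction with
  | empty =>
    intro c _ h
    exact ⟨0, by simp, by simp [stepLabel], by simp, by simpa using h⟩
  | cons t G ih =>
    intro c hT hclo
    rw [Multiset.map_cons, Multiset.sum_cons] at hclo
    obtain ⟨c1, c2, rfl, h1, h2⟩ := hclo.decompose t.1 (G.map Prod.fst).sum rfl
    have hFires : Fires N t.1 t (t.1 - t.1 + t.2.2) :=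
      ⟨hT t (Multiset.mem_cons_self t G), le_refl _, rfl⟩
    obtain ⟨t2, m2', hF2, hlab, hclo'⟩ := (hR t.1 c1 h1).1 t _ hFires
    obtain ⟨ht2T, ht2le, hm2'⟩ := hF2
    obtain ⟨G2, hT2, hlab2, hle2, hclo2⟩ := ih c2 (fun u hu => hT u (Multiset.mem_cons_of_mem hu)) h2
    refine ⟨t2 ::ₘ G2, ?_, ?_, ?_, ?_⟩
    · intro u hu
      rcases Multiset.mem_cons.mp hu with rfl | hu
      · exact ht2T
      · exact hT2 u hu
    · simp only [stepLabel, Multiset.map_cons]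
      rw [hlab]
      exact congrArg (Multiset.cons t2.2.1) hlab2
    · simp only [Multiset.map_cons, Multiset.sum_cons]
      exact add_le_add ht2le hle2
    · simp only [Multiset.map_cons, Multiset.sum_cons]
      rw [sub_helper ht2le hle2]
      have hpost : DAddClosure R t.2.2 m2' := by
        have : t.1 - t.1 + t.2.2 = t.2.2 := by
          rw [tsub_self, zero_add]
        rwa [this] at hclo'
      rw [hm2'] at hpost
      have hadd := hpost.add' hclo2
      rw [add_add_add_comm]
      exact hadd

lemma IsIDPlaceBisim.flip' {N : PTNet S A} (hR : IsIDPlaceBisim N R) :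
    IsIDPlaceBisim N (fun x y => R y x) := by
  intro m1 m2 hc
  have hc' : DAddClosure R m2 m1 := hc.flip'
  obtain ⟨f, g⟩ := hR m2 m1 hc'
  constructor
  · intro t1 m1' hF
    obtain ⟨t2, m2', hF2, hlab, hc2⟩ := g t1 m1' hF
    exact ⟨t2, m2', hF2, hlab.symm, hc2.flip'⟩
  · intro t2 m2' hF
    obtain ⟨t1, m1', hF1, hlab, hc1⟩ := f t2 m2' hF
    exact ⟨t1, m1', hF1, hlab.symm, hc1.flip'⟩

lemma step_forward {N : PTNet S A} (hR : IsIDPlaceBisim N R) :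
    ∀ a b, DAddClosure R a b → ∀ G1 m1', StepFires N a G1 m1' →
      ∃ G2 m2', StepFires N b G2 m2' ∧ stepLabel G1 = stepLabel G2 ∧
        DAddClosure R m1' m2' := by
  intro a b hab G1 m1' hSF
  obtain ⟨hne, hT, hle, hm'⟩ := hSF
  obtain ⟨rest, hrest⟩ := Multiset.le_iff_exists_add.mp hle
  rw [hrest] at hab
  obtain ⟨c, rest2, rfl, h1, h2⟩ := hab.decompose _ _ rfl
  obtain ⟨G2, hT2, hlab, hle2, hclo2⟩ := match_step hR G1 c hT h1
  have hG2ne : G2 ≠ 0 := by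
    intro h0
    apply hne
    have : stepLabel G1 = 0 := by rw [hlab, h0]; simp [stepLabel]
    simpa [stepLabel, Multiset.map_eq_zero] using this
  refine ⟨G2, c + rest2 - (G2.map Prod.fst).sum + (G2.map fun t => t.2.2).sum,
    ⟨hG2ne, hT2, le_trans hle2 (Multiset.le_add_right c rest2), rfl⟩, hlab, ?_⟩
  have hm1' : m1' = (G1.map fun t => t.2.2).sum + rest := by
    rw [hm', hrest, add_comm (G1.map Prod.fst).sum rest, add_tsub_cancel_right, add_comm]
  rw [hm1']
  have heq : c + rest2 - (G2.map Prod.fst).sum + (G2.map fun t => t.2.2).sum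
      = (c - (G2.map Prod.fst).sum + (G2.map fun t => t.2.2).sum) + rest2 := by
    have : c + rest2 - (G2.map Prod.fst).sum = (c - (G2.map Prod.fst).sum) + rest2 := by
      have := sub_helper (S := S) (p2 := 0) hle2 (Multiset.zero_le rest2)
      simpa using this
    rw [this]
    rw [add_right_comm]
  rw [heq]
  exact hclo2.add' h2

end Aux

/-- i-d-place bisimilarity implies step bisimilarity. -/
theorem idPlaceBisimilar_implies_step {S A : Type*} [Fintype S] [Fintype A]
    [DecidableEq S] (N : PTNet S A) (m1 m2 : Multiset S)
    (h : IDPlaceBisimilar N m1 m2) :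
    StepBisimilar N m1 m2 := by
  obtain ⟨R, hR, hclo⟩ := h
  refine ⟨fun x y => DAddClosure R x y, ?_, hclo⟩
  intro a b hab
  constructor
  · intro G1 m1' hSF
    exact step_forward hR a b hab G1 m1' hSF
  · intro G2 m2' hSF
    obtain ⟨G1, m1', hSF1, hlab, hc⟩ :=
      step_forward hR.flip' b a hab.flip' G2 m2' hSF
    exact ⟨G1, m1', hSF1, hlab.symm, hc.flip'⟩

end PlaceBisimPaper
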